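/- arXiv:2302.12430 — 5 statements merged into one kernel-verified Lean document; each statement's English description precedes it below -/
import Mathlib

section
/- If ⟨K_1, …, K_r⟩ is a collectively (r,s)-unavoidable family of simplicial complexes on Fin m with each K_i (m,k)-balanced, then the Kneser-type graph Γ(K) contains no clique on r − s + 1 vertices; equivalently, there do not exist r − s + 1 distinct indices i_1, …, i_{r−s+1} in Fin r and pairwise disjoint finsets A_1, …, A_{r−s+1} of Fin m with |A_l| = k+1 and A_l ∉ K_{i_l} for every l. -/
/-- `K` is an abstract simplicial complex on `Fin m`. -/
def IsSimplicialComplex {m : ℕ} (K : Set (Finset (Fin m))) : Prop :=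
  ∀ A ∈ K, ∀ B ⊆ A, B ∈ K

/-- `A` is rainbow w.r.t. the coloring `c`: `c` is injective on `A`. -/
def IsRainbow {m k : ℕ} (c : Fin m → Fin (k + 1)) (A : Finset (Fin m)) : Prop :=
  Set.InjOn c ↑A

/-- `K` is `(m,k)`-rainbow balanced w.r.t. `c`. -/
def IsRainbowBalanced {m k : ℕ} (c : Fin m → Fin (k + 1)) (K : Set (Finset (Fin m))) : Prop :=
  (∀ A : Finset (Fin m), IsRainbow c A → A.card ≤ k → A ∈ K) ∧ ∀ A ∈ K, IsRainbow c A

/-- `K` is `(m,k)`-balanced. -/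
def IsBalanced {m : ℕ} (k : ℕ) (K : Set (Finset (Fin m))) : Prop :=
  (∀ A : Finset (Fin m), A.card ≤ k → A ∈ K) ∧ ∀ A ∈ K, A.card ≤ k + 1

/-- The family `K` is collectively `(r,s)`-unavoidable. -/
def CollectivelyUnavoidable {m : ℕ} (r s : ℕ) (K : Fin r → Set (Finset (Fin m))) : Prop :=
  ∀ A : Fin r → Finset (Fin m), (∀ i j, i ≠ j → Disjoint (A i) (A j)) →
    ∃ I : Finset (Fin r), I.card = s ∧ ∀ i ∈ I, A i ∈ K i

/-- The family `K` is collectively `(r,s)`-rainbow unavoidable w.r.t. `c`. -/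
def CollectivelyRainbowUnavoidable {m k : ℕ} (c : Fin m → Fin (k + 1)) (r s : ℕ)
    (K : Fin r → Set (Finset (Fin m))) : Prop :=
  ∀ A : Fin r → Finset (Fin m), (∀ i j, i ≠ j → Disjoint (A i) (A j)) →
    (∀ i, IsRainbow c (A i)) →
    ∃ I : Finset (Fin r), I.card = s ∧ ∀ i ∈ I, A i ∈ K i

/-- The face of the standard simplex spanned by the vertex set `A`. -/
def simplexFace {m : ℕ} (A : Finset (Fin m)) : Set (stdSimplex ℝ (Fin m)) :=
  {x | Function.support (x : Fin m → ℝ) ⊆ ↑A}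

/-!
Place the `r - s + 1` clique sets at their indices `ι l` and the empty set everywhere else.
Unavoidability yields `s` indices whose sets lie in their complexes; none of them is an `ι l`,
since `A l ∉ K (ι l)`. So `s + (r - s + 1) ≤ r`, which is impossible (also when `r - s`
truncates to `0`).
-/

open Function in
theorem CollectivelyUnavoidable.add_card_le {m r s : ℕ} {K : Fin r → Set (Finset (Fin m))}
    (hunav : CollectivelyUnavoidable r s K) {α : Type*} [Fintype α] {ι : α → Fin r}
    (hι : Injective ι) {A : α → Finset (Fin m)} (hA : Pairwise (Disjoint on A))
    (hAK : ∀ a, A a ∉ K (ι a)) :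
    s + Fintype.card α ≤ r := by
  classical
  obtain ⟨I, hIcard, hIK⟩ := hunav _ (hA.disjoint_extend_bot (hι.factorsThrough A))
  have hdisj : Disjoint I (Finset.univ.map ⟨ι, hι⟩) := by
    rw [Finset.disjoint_right]
    rintro _ ha hI
    obtain ⟨a, -, rfl⟩ := Finset.mem_map.mp ha
    exact hAK a (hι.extend_apply A ⊥ a ▸ hIK _ hI)
  calc s + Fintype.card α = (I ∪ Finset.univ.map ⟨ι, hι⟩).card := by
        rw [Finset.card_union_of_disjoint hdisj, hIcard, Finset.card_map, Finset.card_univ]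
    _ ≤ r := by simpa using Finset.card_le_univ (I ∪ Finset.univ.map ⟨ι, hι⟩)

theorem unavoidable_no_clique_general
    (m r s k : ℕ)
    (K : Fin r → Set (Finset (Fin m)))
    (hunav : CollectivelyUnavoidable r s K) :
    ¬ ∃ (ι : Fin (r - s + 1) → Fin r) (A : Fin (r - s + 1) → Finset (Fin m)),
        Function.Injective ι ∧
        (∀ l, (A l).card = k + 1 ∧ A l ∉ K (ι l)) ∧
        (∀ l l', l ≠ l' → Disjoint (A l) (A l')) := by
  rintro ⟨ι, A, hι, hA, hdisj⟩
  have := hunav.add_card_le hι (fun l l' hll' ↦ hdisj l l' hll') (fun l ↦ (hA l).2)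
  rw [Fintype.card_fin] at this
  omega

/-- **`(r,s)`-unavoidability forbids cliques of size `r - s + 1` in the Kneser-type graph.** -/
theorem unavoidable_no_clique
    (m r s k : ℕ)
    (K : Fin r → Set (Finset (Fin m)))
    (hcomplex : ∀ i, IsSimplicialComplex (K i))
    (hbal : ∀ i, IsBalanced k (K i))
    (hunav : CollectivelyUnavoidable r s K) :
    ¬ ∃ (ι : Fin (r - s + 1) → Fin r) (A : Fin (r - s + 1) → Finset (Fin m)),
        Function.Injective ι ∧
        (∀ l, (A l).card = k + 1 ∧ A l ∉ K (ι l)) ∧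
        (∀ l l', l ≠ l' → Disjoint (A l) (A l')) :=
  unavoidable_no_clique_general m r s k K hunav
end

section
/- The converse of the clique criterion fails in the balanced setting: let r ≥ 1, 0 < s ≤ r, k ≥ 0 and m > (k+2)(r−s+1), and let K_i for i = 1, …, r all equal the full k-skeleton of the simplex on Fin m, i.e., K_i = {A ⊆ Fin m : |A| ≤ k+1}. Then each K_i is (m,k)-balanced, the Kneser-type graph Γ(K) has no vertices (hence no clique on r−s+1 vertices), but the family ⟨K_1, …, K_r⟩ is NOT collectively (r,s)-unavoidable: there exist pairwise disjoint finsets A_1, …, A_r of Fin m with |A_i| = k+2 for i = 1, …, r−s+1 and A_i = ∅ for i = r−s+2, …, r, and fewer than s indices i satisfy A_i ∈ K_i. -/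
/-! Since `m > (k + 2) * (r - s + 1)`, the first `r - s + 1` sets can be chosen as disjoint
blocks of size `k + 2`; these are not faces of the `k`-skeleton, so only the fewer
than `s` remaining (empty) sets can be faces. -/

open Finset Function

theorem isBalanced_setOf_card_le (m k : ℕ) :
    IsBalanced k {A : Finset (Fin m) | A.card ≤ k + 1} :=
  ⟨fun _ hA => Nat.le_succ_of_le hA, fun _ hA => hA⟩

theorem exists_pairwise_disjoint_card_eq {t b m : ℕ} (h : t * b ≤ m) :
    ∃ B : Fin t → Finset (Fin m), Pairwise (Disjoint on B) ∧ ∀ i, (B i).card = b := by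
  let e : Fin t × Fin b ↪ Fin m := finProdFinEquiv.toEmbedding.trans (Fin.castLEEmb h)
  refine ⟨fun i => univ.map ((Embedding.sectR i _).trans e), ?_, fun i => ?_⟩
  · intro i j hij
    simp only [onFun, disjoint_left, mem_map, mem_univ, true_and]
    rintro _ ⟨x, rfl⟩ ⟨y, hxy⟩
    exact hij (congrArg Prod.fst (e.injective hxy)).symm
  · simp

theorem exists_pairwise_disjoint_card_eq_then_empty {r t b m : ℕ} (h : t * b ≤ m) :
    ∃ A : Fin r → Finset (Fin m), Pairwise (Disjoint on A) ∧
      (∀ i : Fin r, (i : ℕ) < t → (A i).card = b) ∧ (∀ i : Fin r, t ≤ (i : ℕ) → A i = ∅) := by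
  obtain ⟨B, hdisj, hcard⟩ := exists_pairwise_disjoint_card_eq h
  refine ⟨fun i => if hi : (i : ℕ) < t then B ⟨i, hi⟩ else ∅, ?_, fun i hi => ?_, fun i hi => ?_⟩
  · intro i j hij
    simp only [onFun]
    split_ifs
    · exact hdisj (by simpa [Fin.ext_iff] using hij)
    all_goals simp
  · simp [hi, hcard]
  · simp [Nat.not_lt.2 hi]

theorem Fin.card_le_sub_of_forall_le_val {r t : ℕ} {I : Finset (Fin r)}
    (h : ∀ i ∈ I, t ≤ (i : ℕ)) : I.card ≤ r - t := by
  calc I.card = (I.map Fin.valEmbedding).card := (card_map _).symm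
    _ ≤ (Ico t r).card := card_le_card fun n hn => by
        obtain ⟨i, hi, rfl⟩ := mem_map.1 hn
        exact mem_Ico.2 ⟨h i hi, i.isLt⟩
    _ = r - t := Nat.card_Ico _ _

theorem clique_criterion_converse_fails_general
    (r s k m : ℕ) (hs : 0 < s)
    (hm : m > (k + 2) * (r - s + 1))
    (K : Fin r → Set (Finset (Fin m)))
    (hK : ∀ i, K i = {A : Finset (Fin m) | A.card ≤ k + 1}) :
    (∀ i, IsBalanced k (K i)) ∧
    (∀ (i : Fin r) (A : Finset (Fin m)), A.card = k + 1 → A ∈ K i) ∧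
    ¬ CollectivelyUnavoidable r s K ∧
    ∃ A : Fin r → Finset (Fin m),
      (∀ i j, i ≠ j → Disjoint (A i) (A j)) ∧
      (∀ i : Fin r, (i : ℕ) < r - s + 1 → (A i).card = k + 2) ∧
      (∀ i : Fin r, r - s + 1 ≤ (i : ℕ) → A i = ∅) ∧
      (∀ I : Finset (Fin r), (∀ i ∈ I, A i ∈ K i) → I.card < s) := by
  obtain ⟨A, hdisj, hbig, hempty⟩ := exists_pairwise_disjoint_card_eq_then_empty (r := r)
    (t := r - s + 1) (b := k + 2) (m := m) (by rw [mul_comm]; exact hm.le)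
  have hdisj' : ∀ i j, i ≠ j → Disjoint (A i) (A j) := fun i j => @hdisj i j
  have hfew : ∀ I : Finset (Fin r), (∀ i ∈ I, A i ∈ K i) → I.card < s := by
    intro I hI
    have hlate : ∀ i ∈ I, r - s + 1 ≤ (i : ℕ) := fun i hi => by
      by_contra hlt
      have hface : (A i).card ≤ k + 1 := by simpa [hK] using hI i hi
      rw [hbig i (Nat.lt_of_not_le hlt)] at hface
      omega
    have := Fin.card_le_sub_of_forall_le_val hlate
    omega
  refine ⟨fun i => hK i ▸ isBalanced_setOf_card_le m k, fun i B hB => by simp [hK, hB], ?_,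
    A, hdisj', hbig, hempty, hfew⟩
  intro hunavoid
  obtain ⟨I, hIcard, hIK⟩ := hunavoid A hdisj'
  exact (hfew I hIK).ne hIcard

/-- **The converse of the clique criterion fails in the balanced setting.** -/
theorem clique_criterion_converse_fails
    (r s k m : ℕ) (hr : 1 ≤ r) (hs : 0 < s) (hsr : s ≤ r)
    (hm : m > (k + 2) * (r - s + 1))
    (K : Fin r → Set (Finset (Fin m)))
    (hK : ∀ i, K i = {A : Finset (Fin m) | A.card ≤ k + 1}) :
    (∀ i, IsBalanced k (K i)) ∧
    (∀ (i : Fin r) (A : Finset (Fin m)), A.card = k + 1 → A ∈ K i) ∧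
    ¬ CollectivelyUnavoidable r s K ∧
    ∃ A : Fin r → Finset (Fin m),
      (∀ i j, i ≠ j → Disjoint (A i) (A j)) ∧
      (∀ i : Fin r, (i : ℕ) < r - s + 1 → (A i).card = k + 2) ∧
      (∀ i : Fin r, r - s + 1 ≤ (i : ℕ) → A i = ∅) ∧
      (∀ I : Finset (Fin r), (∀ i ∈ I, A i ∈ K i) → I.card < s) :=
  clique_criterion_converse_fails_general r s k m hs hm K hK
end

section
/- Clique criterion in the rainbow setting: let c : Fin m → Fin (k+1) be a coloring and let ⟨K_1, …, K_r⟩ be a family of simplicial complexes on Fin m with each K_i (m,k)-rainbow balanced with respect to c. If the rainbow Kneser-type graph Γ(K) contains no clique on r − s + 1 vertices, then ⟨K_1, …, K_r⟩ is collectively (r,s)-rainbow unavoidable. -/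
open Finset

/-- `Γ(K)` has a clique on `t` vertices, namely the `(ι l, A l)`. -/
def HasRainbowKneserClique {m r k : ℕ} (c : Fin m → Fin (k + 1))
    (K : Fin r → Set (Finset (Fin m))) (t : ℕ) : Prop :=
  ∃ (ι : Fin t → Fin r) (A : Fin t → Finset (Fin m)),
    Function.Injective ι ∧
    (∀ l, IsRainbow c (A l) ∧ (A l).card = k + 1 ∧ A l ∉ K (ι l)) ∧
    (∀ l l', l ≠ l' → Disjoint (A l) (A l'))

theorem IsRainbow.card_le {m k : ℕ} {c : Fin m → Fin (k + 1)} {A : Finset (Fin m)}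
    (hA : IsRainbow c A) : #A ≤ k + 1 := by
  simpa using card_le_card_of_injOn c (fun x _ => mem_univ (c x)) hA

theorem IsRainbowBalanced.card_eq_of_notMem {m k : ℕ} {c : Fin m → Fin (k + 1)}
    {K : Set (Finset (Fin m))} (hK : IsRainbowBalanced c K) {A : Finset (Fin m)}
    (hA : IsRainbow c A) (hAK : A ∉ K) : #A = k + 1 := by
  have hsmall : ¬ #A ≤ k := fun h => hAK (hK.1 A hA h)
  have := hA.card_le
  omega

theorem Finset.exists_card_eq_forall_of_card_filter_not_le {α : Type*} [Fintype α]
    (P : α → Prop) [DecidablePred P] {s : ℕ} (h : s + #{i | ¬ P i} ≤ Fintype.card α) :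
    ∃ I : Finset α, #I = s ∧ ∀ i ∈ I, P i := by
  have hsplit := card_filter_add_card_filter_not (s := (univ : Finset α)) P
  rw [card_univ] at hsplit
  obtain ⟨I, hIsub, hIcard⟩ := exists_subset_card_eq (s := univ.filter P) (n := s) (by omega)
  exact ⟨I, hIcard, fun i hi => (mem_filter.1 (hIsub hi)).2⟩

theorem hasRainbowKneserClique_of_le_card_filter_notMem {m r k t : ℕ}
    {c : Fin m → Fin (k + 1)} {K : Fin r → Set (Finset (Fin m))}
    (hbal : ∀ i, IsRainbowBalanced c (K i)) {A : Fin r → Finset (Fin m)}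
    (hdisj : ∀ i j, i ≠ j → Disjoint (A i) (A j)) (hrain : ∀ i, IsRainbow c (A i))
    [DecidablePred fun i => A i ∈ K i] (ht : t ≤ #{i | A i ∉ K i}) :
    HasRainbowKneserClique c K t := by
  set ι : Fin t → Fin r := fun l => orderEmbOfFin {i | A i ∉ K i} rfl (Fin.castLE ht l)
  have hι : Function.Injective ι :=
    (orderEmbOfFin _ rfl).injective.comp (Fin.castLE_injective ht)
  have hbad : ∀ l, A (ι l) ∉ K (ι l) := fun l =>
    (mem_filter.1 (orderEmbOfFin_mem {i | A i ∉ K i} rfl (Fin.castLE ht l))).2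
  refine ⟨ι, A ∘ ι, hι, fun l => ⟨hrain _, ?_, hbad l⟩,
    fun l l' hll' => hdisj _ _ (hι.ne hll')⟩
  exact (hbal _).card_eq_of_notMem (hrain _) (hbad l)

theorem rainbow_no_clique_implies_unavoidable_general
    (m r s k : ℕ) (hsr : s ≤ r)
    (c : Fin m → Fin (k + 1))
    (K : Fin r → Set (Finset (Fin m)))
    (hbal : ∀ i, IsRainbowBalanced c (K i))
    (hnoclique : ¬ ∃ (ι : Fin (r - s + 1) → Fin r) (A : Fin (r - s + 1) → Finset (Fin m)),
        Function.Injective ι ∧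
        (∀ l, IsRainbow c (A l) ∧ (A l).card = k + 1 ∧ A l ∉ K (ι l)) ∧
        (∀ l l', l ≠ l' → Disjoint (A l) (A l'))) :
    CollectivelyRainbowUnavoidable c r s K := by
  classical
  intro A hdisj hrain
  have hfew : #{i | A i ∉ K i} ≤ r - s := by
    by_contra! hmany
    exact hnoclique (hasRainbowKneserClique_of_le_card_filter_notMem hbal hdisj hrain hmany)
  apply exists_card_eq_forall_of_card_filter_not_le
  rw [Fintype.card_fin]
  omega

/-- **Clique criterion in the rainbow setting:** no `(r-s+1)`-clique in the rainbow
Kneser-type graph implies collective `(r,s)`-rainbow unavoidability. -/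
theorem rainbow_no_clique_implies_unavoidable
    (m r s k : ℕ) (hs : 0 < s) (hsr : s ≤ r)
    (c : Fin m → Fin (k + 1))
    (K : Fin r → Set (Finset (Fin m)))
    (hcomplex : ∀ i, IsSimplicialComplex (K i))
    (hbal : ∀ i, IsRainbowBalanced c (K i))
    (hnoclique : ¬ ∃ (ι : Fin (r - s + 1) → Fin r) (A : Fin (r - s + 1) → Finset (Fin m)),
        Function.Injective ι ∧
        (∀ l, IsRainbow c (A l) ∧ (A l).card = k + 1 ∧ A l ∉ K (ι l)) ∧
        (∀ l l', l ≠ l' → Disjoint (A l) (A l'))) :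
    CollectivelyRainbowUnavoidable c r s K :=
  rainbow_no_clique_implies_unavoidable_general m r s k hsr c K hbal hnoclique
end

section
/- Tverberg's theorem: Let r ≥ 1 and d ≥ 1 be integers and m ≥ (r−1)(d+1) + 1. Then any finite set S of m points in ℝ^d can be partitioned into r nonempty pairwise disjoint subsets S_1, …, S_r such that ⋂_{i=1}^r convexHull(S_i) ≠ ∅. -/
/-!
Sarkaria's proof. Write `r = k + 1`, lift each point to `ŝⱼ = (Sⱼ, 1) ∈ ℝ^{d+1}` and tensor it
with `k + 1` vectors `vᵢ ∈ ℝᵏ` whose only linear relations are the constant ones. For every point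
`j` the vectors `vᵢ ⊗ ŝⱼ` have centroid `0`, and there are more than `k (d + 1)` points, so
Bárány's colourful Carathéodory theorem picks a colour `σ j` for each point with
`∑ⱼ μⱼ (v_{σ j} ⊗ ŝⱼ) = 0` for some convex weights `μ`. Grouping by colour,
`∑ᵢ vᵢ ⊗ (∑_{σ j = i} μⱼ ŝⱼ) = 0`, so `∑_{σ j = i} μⱼ ŝⱼ` does not depend on `i`: all colour
classes have the same weight (the last coordinate), hence weight `1/r`, and the same centre of mass.

Colourful Carathéodory: choose the selection whose convex hull is nearest to `0`, with nearest
point `x`. If `x ≠ 0`, then `x` is a positive combination of affinely independent selected points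
on the supporting hyperplane `⟪x, ·⟫ = ‖x‖²`, which misses `0`; so there are at most `dim` of
them and some colour is unused. Swapping in a point `y` of that colour with `⟪x, y⟫ ≤ 0` keeps `x`
in the hull, which is then still at distance `‖x‖` from `0`, yet `y` violates the nearest-point
inequality at `x`.
-/

open Module Metric
open scoped RealInnerProductSpace

lemma AffineIndependent.card_le_finrank_of_vectorSpan_ne_top {k V ι : Type*} [DivisionRing k]
    [AddCommGroup V] [Module k V] [FiniteDimensional k V] [Fintype ι] {p : ι → V}
    (hp : AffineIndependent k p) (h : vectorSpan k (Set.range p) ≠ ⊤) :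
    Fintype.card ι ≤ finrank k V := by
  cases isEmpty_or_nonempty ι
  · simp
  have := hp.finrank_vectorSpan_add_one
  have := Submodule.finrank_lt h
  omega

lemma LinearMap.apply_eq_of_le_of_apply_sum_smul_eq {V ι : Type*} [AddCommGroup V] [Module ℝ V]
    [Fintype ι] (f : V →ₗ[ℝ] ℝ) {z : ι → V} {w : ι → ℝ} (hw : ∀ i, 0 < w i)
    (hw₁ : ∑ i, w i = 1) {c : ℝ} (hle : ∀ i, c ≤ f (z i)) (hc : f (∑ i, w i • z i) = c) (i : ι) :
    f (z i) = c := by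
  have hsum : ∑ i, w i * c = ∑ i, w i * f (z i) := by
    rw [← Finset.sum_mul, hw₁, one_mul, ← hc, map_sum]
    simp only [map_smul, smul_eq_mul]
  have := (Finset.sum_eq_sum_iff_of_le fun i _ => mul_le_mul_of_nonneg_left (hle i) (hw i).le).1
    hsum i (Finset.mem_univ i)
  exact (mul_left_cancel₀ (hw i).ne' this).symm

section ColorfulCaratheodory

variable {E : Type*} [NormedAddCommGroup E] [InnerProductSpace ℝ E]

lemma exists_inner_nonpos_of_zero_mem_convexHull {s : Set E} (hs : (0 : E) ∈ convexHull ℝ s)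
    (x : E) : ∃ y ∈ s, ⟪x, y⟫ ≤ 0 := by
  by_contra! h
  have hconv : Convex ℝ {v : E | 0 < ⟪x, v⟫} := convex_halfSpace_gt (innerₛₗ ℝ x).isLinear 0
  have h0 : (0 : E) ∈ {v : E | 0 < ⟪x, v⟫} := convexHull_min (fun y hy => h y hy) hconv hs
  simp at h0

lemma inner_self_le_inner_of_norm_eq_infDist {K : Set E} (hK : Convex ℝ K) {x : E} (hx : x ∈ K)
    (hmin : ‖x‖ = infDist 0 K) : ∀ w ∈ K, ⟪x, x⟫ ≤ ⟪x, w⟫ := by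
  intro w hw
  have hiInf : ‖0 - x‖ = ⨅ w : K, ‖0 - (w : E)‖ := by
    simpa [infDist_eq_iInf, dist_eq_norm] using hmin
  have := (norm_eq_iInf_iff_real_inner_le_zero hK hx).1 hiInf w hw
  rw [zero_sub, inner_neg_left, inner_sub_right] at this
  linarith

lemma AffineIndependent.card_le_finrank_of_inner_eq [FiniteDimensional ℝ E] {ι : Type*}
    [Fintype ι] {p : ι → E} (hp : AffineIndependent ℝ p) {x : E} (hx : x ≠ 0) {c : ℝ}
    (h : ∀ i, ⟪x, p i⟫ = c) : Fintype.card ι ≤ finrank ℝ E := by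
  have hker : vectorSpan ℝ (Set.range p) ≤ LinearMap.ker (innerₛₗ ℝ x) := by
    rw [vectorSpan_def, Submodule.span_le]
    rintro _ ⟨_, ⟨i, rfl⟩, _, ⟨j, rfl⟩, rfl⟩
    simp [inner_sub_right, h]
  refine hp.card_le_finrank_of_vectorSpan_ne_top fun htop => hx ?_
  simpa using hker (htop ▸ Submodule.mem_top : x ∈ vectorSpan ℝ (Set.range p))

theorem exists_zero_mem_convexHull_colorful [FiniteDimensional ℝ E] {κ ι : Type*} [Fintype κ]
    [Finite ι] (hκ : finrank ℝ E < Fintype.card κ) (b : κ → ι → E)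
    (hb : ∀ j, (0 : E) ∈ convexHull ℝ (Set.range (b j))) :
    ∃ σ : κ → ι, (0 : E) ∈ convexHull ℝ (Set.range fun j => b j (σ j)) := by
  classical
  have : Nonempty κ := Fintype.card_pos_iff.1 (by omega)
  have : Nonempty ι := by
    obtain ⟨_, i, -⟩ := convexHull_nonempty_iff.1 ⟨0, hb (Classical.arbitrary κ)⟩
    exact ⟨i⟩
  let K : (κ → ι) → Set E := fun σ => convexHull ℝ (Set.range fun j => b j (σ j))
  obtain ⟨σ, hσ⟩ := Finite.exists_min fun σ : κ → ι => infDist 0 (K σ)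
  obtain ⟨x, hxK, hxd⟩ := ((Set.finite_range fun j => b j (σ j)).isCompact_convexHull
    (𝕜 := ℝ)).exists_infDist_eq_dist (Set.range_nonempty _).convexHull 0
  by_cases hx : x = 0
  · exact ⟨σ, hx ▸ hxK⟩
  exfalso
  rw [dist_zero_left] at hxd
  have hnear := inner_self_le_inner_of_norm_eq_infDist (convex_convexHull ℝ _) hxK hxd.symm
  obtain ⟨ι', _, z, w, hzK, hz, hw, hw₁, hwx⟩ := eq_pos_convex_span_of_mem_convexHull hxK
  have hface := (innerₛₗ ℝ x).apply_eq_of_le_of_apply_sum_smul_eq hw hw₁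
    (fun i => hnear _ (subset_convexHull ℝ _ (hzK ⟨i, rfl⟩))) (by simp [hwx])
  have hcard := hz.card_le_finrank_of_inner_eq hx hface
  choose c hc using fun i => hzK ⟨i, rfl⟩
  obtain ⟨k, hk⟩ : ∃ k, k ∉ Set.range c := by
    by_contra! hsurj
    have := Fintype.card_le_of_surjective c hsurj
    omega
  obtain ⟨_, ⟨y, rfl⟩, hy⟩ := exists_inner_nonpos_of_zero_mem_convexHull (hb k) x
  let σ' := Function.update σ k y
  have hzK' : ∀ i, z i ∈ K σ' := fun i => subset_convexHull ℝ _
    ⟨c i, by simp only [σ', Function.update_of_ne (fun h => hk ⟨i, h⟩), ← hc i]⟩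
  have hxK' : x ∈ K σ' := hwx ▸
    (convex_convexHull ℝ _).sum_mem (fun i _ => (hw i).le) hw₁ fun i _ => hzK' i
  have hyK' : b k y ∈ K σ' := subset_convexHull ℝ _ ⟨k, by simp [σ']⟩
  have hnear' := inner_self_le_inner_of_norm_eq_infDist (convex_convexHull ℝ _) hxK'
    (le_antisymm (hxd ▸ hσ σ') (by simpa using infDist_le_dist_of_mem (x := 0) hxK')) _ hyK'
  exact hx (inner_self_eq_zero.1 (le_antisymm (hnear'.trans hy) real_inner_self_nonneg))

end ColorfulCaratheodory

def tensorVec {α β : Type*} (v : α → ℝ) (w : β → ℝ) : EuclideanSpace ℝ (α × β) :=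
  WithLp.toLp 2 fun pq => v pq.1 * w pq.2

section Sarkaria

variable {k : ℕ}

/-- `e₀, …, e_{k-1}, -(e₀ + ⋯ + e_{k-1})`: `k + 1` vectors of `ℝᵏ` whose only linear relations
are the constant ones. -/
def sarkariaVector (k : ℕ) : Fin (k + 1) → Fin k → ℝ :=
  Fin.snoc (fun i => Pi.single i 1) (-1)

lemma sum_mul_sarkariaVector (c : Fin (k + 1) → ℝ) (p : Fin k) :
    ∑ i, c i * sarkariaVector k i p = c p.castSucc - c (Fin.last k) := by
  simp [Fin.sum_univ_castSucc, sarkariaVector, Pi.single_apply, sub_eq_add_neg]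

lemma sum_sarkariaVector (p : Fin k) : ∑ i, sarkariaVector k i p = 0 := by
  simpa using sum_mul_sarkariaVector 1 p

lemma eq_last_of_sum_mul_sarkariaVector_eq_zero {c : Fin (k + 1) → ℝ}
    (h : ∀ p, ∑ i, c i * sarkariaVector k i p = 0) (i : Fin (k + 1)) : c i = c (Fin.last k) := by
  induction i using Fin.lastCases with
  | last => rfl
  | cast p => simpa [sum_mul_sarkariaVector, sub_eq_zero] using h p

lemma zero_mem_convexHull_range_tensorVec_sarkariaVector {β : Type*} (w : β → ℝ) :
    (0 : EuclideanSpace ℝ (Fin k × β)) ∈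
      convexHull ℝ (Set.range fun i => tensorVec (sarkariaVector k i) w) := by
  refine mem_convexHull_of_exists_fintype (fun _ => ((k : ℝ) + 1)⁻¹) _ (fun _ => by positivity)
    (by simp [mul_inv_cancel₀ (by positivity : (k : ℝ) + 1 ≠ 0)]) (fun i => ⟨i, rfl⟩) ?_
  ext pq
  simp [tensorVec, ← Finset.mul_sum, ← Finset.sum_mul, sum_sarkariaVector]

lemma sum_fiber_smul_eq_of_sum_smul_tensorVec_eq_zero {κ β : Type*} (s : Finset κ)
    (σ : κ → Fin (k + 1)) (μ : κ → ℝ) (w : κ → β → ℝ)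
    (h : ∑ j ∈ s, μ j • tensorVec (sarkariaVector k (σ j)) (w j) = 0) (i : Fin (k + 1)) :
    ∑ j ∈ s with σ j = i, μ j • w j = ∑ j ∈ s with σ j = Fin.last k, μ j • w j := by
  funext q
  refine eq_last_of_sum_mul_sarkariaVector_eq_zero
    (c := fun i => (∑ j ∈ s with σ j = i, μ j • w j) q) (fun p => ?_) i
  calc ∑ i, (∑ j ∈ s with σ j = i, μ j • w j) q * sarkariaVector k i p
      = ∑ i, ∑ j ∈ s with σ j = i, μ j * (sarkariaVector k (σ j) p * w j q) := by
        refine Finset.sum_congr rfl fun i _ => ?_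
        rw [Finset.sum_apply, Finset.sum_mul]
        refine Finset.sum_congr rfl fun j hj => ?_
        rw [(Finset.mem_filter.1 hj).2]
        simp only [Pi.smul_apply, smul_eq_mul]
        ring
    _ = ∑ j ∈ s, μ j * (sarkariaVector k (σ j) p * w j q) := Finset.sum_fiberwise s σ _
    _ = 0 := by simpa [tensorVec] using congrArg (fun x => x (p, q)) h

end Sarkaria

def affineLift {d : ℕ} (x : EuclideanSpace ℝ (Fin d)) : Fin (d + 1) → ℝ :=
  Fin.snoc (α := fun _ => ℝ) x.ofLp 1

lemma sum_smul_affineLift {κ : Type*} {d : ℕ} (s : Finset κ) (μ : κ → ℝ)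
    (S : κ → EuclideanSpace ℝ (Fin d)) :
    ∑ j ∈ s, μ j • affineLift (S j) =
      Fin.snoc (α := fun _ => ℝ) (∑ j ∈ s, μ j • S j).ofLp (∑ j ∈ s, μ j) := by
  funext q
  refine Fin.lastCases ?_ (fun q => ?_) q <;> simp [affineLift]

lemma exists_tverberg_of_fiber_sums_eq {κ ι E : Type*} [Fintype ι] [DecidableEq ι]
    [AddCommGroup E] [Module ℝ E] (s : Finset κ) (σ : κ → ι) (μ : κ → ℝ) (S : κ → E)
    (hμ : ∀ j ∈ s, 0 ≤ μ j) (hμ₁ : ∑ j ∈ s, μ j = 1) (i₀ : ι)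
    (hweight : ∀ i, ∑ j ∈ s with σ j = i, μ j = ∑ j ∈ s with σ j = i₀, μ j)
    (hsum : ∀ i, ∑ j ∈ s with σ j = i, μ j • S j = ∑ j ∈ s with σ j = i₀, μ j • S j) :
    (∀ i, ∃ j, σ j = i) ∧ (⋂ i, convexHull ℝ (S '' {j | σ j = i})).Nonempty := by
  have hpos : ∀ i, 0 < ∑ j ∈ s with σ j = i, μ j := by
    have : (Fintype.card ι : ℝ) * ∑ j ∈ s with σ j = i₀, μ j = 1 := by
      rw [← hμ₁, ← Finset.sum_fiberwise s σ μ, Finset.sum_congr rfl fun i _ => hweight i,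
        Finset.sum_const, Finset.card_univ, nsmul_eq_mul]
    intro i
    rw [hweight i]
    exact pos_of_mul_pos_right (this ▸ one_pos) (Nat.cast_nonneg _)
  refine ⟨fun i => ?_, (s.filter (σ · = i₀)).centerMass μ S, Set.mem_iInter.2 fun i => ?_⟩
  · obtain ⟨j, hj, -⟩ := Finset.exists_ne_zero_of_sum_ne_zero (hpos i).ne'
    exact ⟨j, (Finset.mem_filter.1 hj).2⟩
  · have : (s.filter (σ · = i)).centerMass μ S = (s.filter (σ · = i₀)).centerMass μ S := by
      simp only [Finset.centerMass, hweight i, hsum i]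
    rw [← this]
    refine convexHull_mono (Set.image_mono fun j hj => ?_)
      ((s.filter (σ · = i)).centerMass_mem_convexHull (fun j hj => hμ j (Finset.mem_filter.1 hj).1)
        (hpos i) fun j hj => Set.mem_image_of_mem S hj)
    exact (Finset.mem_filter.1 hj).2

theorem exists_tverberg_coloring {κ : Type*} [Fintype κ] {k d : ℕ}
    (hκ : k * (d + 1) < Fintype.card κ) (S : κ → EuclideanSpace ℝ (Fin d)) :
    ∃ σ : κ → Fin (k + 1),
      (∀ i, ∃ j, σ j = i) ∧ (⋂ i, convexHull ℝ (S '' {j | σ j = i})).Nonempty := by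
  obtain ⟨σ, hσ⟩ := exists_zero_mem_convexHull_colorful (by simpa using hκ)
    (fun j i => tensorVec (sarkariaVector k i) (affineLift (S j)))
    fun j => zero_mem_convexHull_range_tensorVec_sarkariaVector _
  rw [convexHull_range_eq_exists_affineCombination] at hσ
  obtain ⟨s, μ, hμ, hμ₁, hμ0⟩ := hσ
  rw [Finset.affineCombination_eq_linear_combination _ _ _ hμ₁] at hμ0
  have hfiber := sum_fiber_smul_eq_of_sum_smul_tensorVec_eq_zero s σ μ _ hμ0
  simp only [sum_smul_affineLift, Fin.snoc_inj] at hfiber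
  exact ⟨σ, exists_tverberg_of_fiber_sums_eq s σ μ S hμ hμ₁ (Fin.last k)
    (fun i => (hfiber i).2) fun i => WithLp.ofLp_injective 2 (hfiber i).1⟩

theorem tverberg_general
    (r d m : ℕ) (hr : 1 ≤ r) (hm : m ≥ (r - 1) * (d + 1) + 1)
    (S : Fin m → EuclideanSpace ℝ (Fin d)) :
    ∃ P : Fin r → Finset (Fin m),
      (∀ i, (P i).Nonempty) ∧
      (∀ i j, i ≠ j → Disjoint (P i) (P j)) ∧
      (∀ v : Fin m, ∃ i, v ∈ P i) ∧
      (⋂ i, convexHull ℝ (S '' ↑(P i))).Nonempty := by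
  obtain ⟨k, rfl⟩ := Nat.exists_eq_add_of_le' hr
  obtain ⟨σ, hσ, hx⟩ := exists_tverberg_coloring (κ := Fin m) (k := k) (d := d)
    (by simp only [Fintype.card_fin, Nat.add_sub_cancel] at hm ⊢; omega) S
  refine ⟨fun i => {j | σ j = i}, fun i => ?_, fun i i' h => ?_, fun j => ⟨σ j, by simp⟩,
    by simpa using hx⟩
  · obtain ⟨j, hj⟩ := hσ i
    exact ⟨j, by simpa using hj⟩
  · exact Finset.disjoint_filter.2 fun j _ hj hj' => h (hj ▸ hj')

/-- **Tverberg's theorem.** Any `m ≥ (r-1)(d+1)+1` points of `ℝ^d` can be partitioned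
into `r` nonempty pairwise disjoint parts whose convex hulls have a common point. -/
theorem tverberg
    (r d m : ℕ) (hr : 1 ≤ r) (hd : 1 ≤ d) (hm : m ≥ (r - 1) * (d + 1) + 1)
    (S : Fin m → EuclideanSpace ℝ (Fin d)) :
    ∃ P : Fin r → Finset (Fin m),
      (∀ i, (P i).Nonempty) ∧
      (∀ i j, i ≠ j → Disjoint (P i) (P j)) ∧
      (∀ v : Fin m, ∃ i, v ∈ P i) ∧
      (⋂ i, convexHull ℝ (S '' ↑(P i))).Nonempty :=
  tverberg_general r d m hr hm S
end

section
/- Let 0 ≤ d < n and let V be a d-dimensional linear subspace of ℝ^n. Then the complement ℝ^n \ V is homotopy equivalent to the sphere S^{n−d−1} (the unit sphere in an (n−d)-dimensional Euclidean space). -/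
/-!
Splitting `ℝⁿ = V ⊕ W` with `W` a complement of `V`, a point lies off `V` exactly when its
`W`-component is nonzero, so `ℝⁿ ∖ V ≅ V × (W ∖ 0) ≅ V × S(W) × (0, ∞)` by polar coordinates
on `W`. Both `V` and `(0, ∞)` are contractible, leaving the unit sphere of `W ≅ ℝⁿ⁻ᵈ`.
-/

open Metric
open scoped ContinuousMap

noncomputable def ContinuousMap.HomotopyEquiv.prodContractible (X C : Type*) [TopologicalSpace X]
    [TopologicalSpace C] [ContractibleSpace C] : X × C ≃ₕ X :=
  ((ContinuousMap.HomotopyEquiv.refl X).prodCongr (ContractibleSpace.hequiv_unit C).some).trans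
    (Homeomorph.prodPUnit X).toHomotopyEquiv

noncomputable def homotopyEquivUnitSphere (F : Type*) [NormedAddCommGroup F] [NormedSpace ℝ F] :
    ({0}ᶜ : Set F) ≃ₕ sphere (0 : F) 1 :=
  haveI : ContractibleSpace (Set.Ioi (0 : ℝ)) :=
    (convex_Ioi (0 : ℝ)).contractibleSpace ⟨1, Set.mem_Ioi.2 one_pos⟩
  (homeomorphUnitSphereProd F).toHomotopyEquiv.trans (.prodContractible _ _)

noncomputable def LinearIsometryEquiv.sphereHomeomorph {E F : Type*} [SeminormedAddCommGroup E]
    [SeminormedAddCommGroup F] [NormedSpace ℝ E] [NormedSpace ℝ F] (e : E ≃ₗᵢ[ℝ] F) (r : ℝ) :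
    sphere (0 : E) r ≃ₜ sphere (0 : F) r :=
  e.toHomeomorph.subtype fun x => by simp

namespace Submodule

noncomputable def complHomeomorphProd {𝕜 E : Type*} [NontriviallyNormedField 𝕜]
    [CompleteSpace 𝕜] [NormedAddCommGroup E] [NormedSpace 𝕜 E] [FiniteDimensional 𝕜 E]
    {p q : Submodule 𝕜 E} (h : IsCompl p q) :
    {x : E // x ∉ p} ≃ₜ p × ({0}ᶜ : Set q) :=
  let e := (p.prodEquivOfIsCompl q h).symm.toContinuousLinearEquiv.toHomeomorph
  ((e.subtype (q := (· ∈ (Set.univ : Set p) ×ˢ ({0}ᶜ : Set q))) fun x => by simp [e]).trans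
    (Homeomorph.Set.prod _ _)).trans
    ((Homeomorph.Set.univ p).prodCongr (Homeomorph.refl _))

noncomputable def complHomotopyEquivSphere {E : Type*} [NormedAddCommGroup E] [NormedSpace ℝ E]
    [FiniteDimensional ℝ E] {p q : Submodule ℝ E} (h : IsCompl p q) :
    {x : E // x ∉ p} ≃ₕ sphere (0 : q) 1 :=
  ((complHomeomorphProd h).trans (Homeomorph.prodComm _ _)).toHomotopyEquiv.trans <|
    (ContinuousMap.HomotopyEquiv.prodContractible _ _).trans (homotopyEquivUnitSphere q)

end Submodule

theorem complement_subspace_homotopyEquiv_sphere_general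
    (n d : ℕ)
    (V : Submodule ℝ (EuclideanSpace ℝ (Fin n)))
    (hV : Module.finrank ℝ V = d) :
    Nonempty
      (ContinuousMap.HomotopyEquiv
        {x : EuclideanSpace ℝ (Fin n) // x ∉ V}
        (Metric.sphere (0 : EuclideanSpace ℝ (Fin (n - d))) 1)) := by
  have hVperp : Module.finrank ℝ Vᗮ = n - d := by
    refine Submodule.finrank_add_finrank_orthogonal' ?_
    have hVn := V.finrank_le
    rw [finrank_euclideanSpace_fin] at hVn ⊢
    omega
  let φ : Vᗮ ≃ₗᵢ[ℝ] EuclideanSpace ℝ (Fin (n - d)) :=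
    ((stdOrthonormalBasis ℝ Vᗮ).reindex (finCongr hVperp)).repr
  exact ⟨(V.complHomotopyEquivSphere V.isCompl_orthogonal).trans
    (φ.sphereHomeomorph 1).toHomotopyEquiv⟩

/-- **The complement of a `d`-dimensional linear subspace of `ℝ^n` is homotopy
equivalent to the sphere `S^{n-d-1}`.** -/
theorem complement_subspace_homotopyEquiv_sphere
    (n d : ℕ) (hdn : d < n)
    (V : Submodule ℝ (EuclideanSpace ℝ (Fin n)))
    (hV : Module.finrank ℝ V = d) :
    Nonempty
      (ContinuousMap.HomotopyEquiv
        {x : EuclideanSpace ℝ (Fin n) // x ∉ V}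
        (Metric.sphere (0 : EuclideanSpace ℝ (Fin (n - d))) 1)) :=
  complement_subspace_homotopyEquiv_sphere_general n d V hV
end
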